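/- In the four-state protocol of Algorithm 2, let a configuration C be reachable from the all-r^ω initial configuration on n agents. If n is odd and #token = 1 in C, then #red − #blue = 1 in C. -/

import Mathlib

/-- States of the four-state protocol: r^ω, b^ω, r, b. -/
inductive St : Type
  | rw | bw | r | b
deriving DecidableEq

/-- Deterministic transition function of the protocol. -/
def delta : St → St → St × St
  | .rw, .rw => (.r, .b)
  | .rw, .bw => (.b, .b)
  | .bw, .rw => (.b, .b)
  | .rw, .r  => (.r, .rw)
  | .r,  .rw => (.rw, .r)
  | .bw, .b  => (.b, .bw)
  | .b,  .bw => (.bw, .b)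
  | .rw, .b  => (.r, .bw)
  | .b,  .rw => (.bw, .r)
  | .bw, .r  => (.b, .rw)
  | .r,  .bw => (.rw, .b)
  | p, q     => (p, q)

/-- One step: apply the rule to an ordered pair of distinct agents. -/
def Step {n : ℕ} (C C' : Fin n → St) : Prop :=
  ∃ i j : Fin n, i ≠ j ∧
    C' = Function.update (Function.update C i (delta (C i) (C j)).1) j
          (delta (C i) (C j)).2

/-- Number of agents in state `s`. -/
def cnt {n : ℕ} (C : Fin n → St) (s : St) : ℕ :=
  (Finset.univ.filter fun a => C a = s).card

/-- Number of token-holding agents (state r^ω or b^ω). -/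
def tokens {n : ℕ} (C : Fin n → St) : ℕ := cnt C .rw + cnt C .bw

/-- Number of red agents (state r^ω or r). -/
def reds {n : ℕ} (C : Fin n → St) : ℕ := cnt C .rw + cnt C .r

/-- Number of blue agents (state b^ω or b). -/
def blues {n : ℕ} (C : Fin n → St) : ℕ := cnt C .bw + cnt C .b

/-- Color of a state: `true` = red, `false` = blue. -/
def isRed : St → Bool
  | .rw => true
  | .r  => true
  | .bw => false
  | .b  => false

/-! Every rule preserves `#r - #b - 2·#bʷ`, which is `0` in the all-`rʷ` configuration.
Hence `#red - #blue = #rʷ + #bʷ = #token` in every reachable configuration. -/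

def weight (s : St) : ℤ :=
  (if s = .r then 1 else 0) - (if s = .b then 1 else 0) - 2 * (if s = .bw then 1 else 0)

open Finset Function

theorem Step.sum_comp_eq {M : Type*} [AddCommMonoid M] (f : St → M)
    (hf : ∀ p q, f (delta p q).1 + f (delta p q).2 = f p + f q)
    {n : ℕ} {C C' : Fin n → St} (h : Step C C') :
    ∑ x, f (C' x) = ∑ x, f (C x) := by
  obtain ⟨i, j, hij, rfl⟩ := h
  have hj : j ∈ univ.erase i := mem_erase.2 ⟨hij.symm, mem_univ j⟩
  simp only [← add_sum_erase _ _ (mem_univ i), ← add_sum_erase _ _ hj, ← add_assoc]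
  congr 1
  · simpa [update_of_ne hij] using hf (C i) (C j)
  · refine sum_congr rfl fun x hx => ?_
    obtain ⟨hxj, hxi⟩ : x ≠ j ∧ x ≠ i := by simpa using hx
    rw [update_of_ne hxj, update_of_ne hxi]

theorem sum_comp_eq_of_reachable {M : Type*} [AddCommMonoid M] (f : St → M)
    (hf : ∀ p q, f (delta p q).1 + f (delta p q).2 = f p + f q)
    {n : ℕ} {C₀ C : Fin n → St} (h : Relation.ReflTransGen Step C₀ C) :
    ∑ x, f (C x) = ∑ x, f (C₀ x) := by
  induction h with
  | refl => rfl
  | tail _ hstep ih => rw [hstep.sum_comp_eq f hf, ih]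

theorem weight_delta (p q : St) :
    weight (delta p q).1 + weight (delta p q).2 = weight p + weight q := by
  cases p <;> cases q <;> decide

theorem sum_weight {n : ℕ} (C : Fin n → St) :
    ∑ x, weight (C x) = (cnt C .r : ℤ) - cnt C .b - 2 * cnt C .bw := by
  simp only [weight, cnt, natCast_card_filter, sum_sub_distrib, mul_sum]

theorem cnt_r_eq_of_reachable {n : ℕ} {C : Fin n → St}
    (hreach : Relation.ReflTransGen Step (fun _ => St.rw) C) :
    cnt C .r = cnt C .b + 2 * cnt C .bw := by
  have h := sum_comp_eq_of_reachable weight weight_delta hreach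
  rw [sum_weight] at h
  simp only [weight, reduceCtorEq, ite_false, sub_zero, mul_zero, sum_const_zero] at h
  omega

theorem reds_eq_blues_add_tokens {n : ℕ} {C : Fin n → St}
    (hreach : Relation.ReflTransGen Step (fun _ => St.rw) C) :
    reds C = blues C + tokens C := by
  have := cnt_r_eq_of_reachable hreach
  simp only [reds, blues, tokens]
  omega

theorem stmt4_general (n : ℕ) (C : Fin n → St)
    (hreach : Relation.ReflTransGen Step (fun _ => St.rw) C)
    (htok : tokens C = 1) :
    reds C = blues C + 1 := by
  rw [reds_eq_blues_add_tokens hreach, htok]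

theorem stmt4 (n : ℕ) (C : Fin n → St)
    (hreach : Relation.ReflTransGen Step (fun _ => St.rw) C)
    (hodd : Odd n) (htok : tokens C = 1) :
    reds C = blues C + 1 :=
  stmt4_general n C hreach htok
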